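/- Fix r > 1/2 and define y(s,r) = 4r·(Γ((s+2r+1)/(4r))·Γ((s+4r−1)/(4r)))/(Γ((s+1)/(4r))·Γ((s+2r−1)/(4r))) for s > 0. Then the function f(s) = ∂²/∂s² (ln y)(s,r) is the unique function on (0, ∞) tending to 0 at +∞ that satisfies the functional equation f(s) + f(s+2r) = −1/(s+1)² − 1/(s+2r−1)² for all s > 0. -/

import Mathlib

/-!
Write `ψ = (log Γ)'`, `ψ₁ = ψ'` and `A, B, C, D` for the four Gamma arguments
`(s+2r+1)/(4r), (s+4r-1)/(4r), (s+1)/(4r), (s+2r-1)/(4r)`. The second log-derivative of `y` is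
`(ψ₁ A + ψ₁ B - ψ₁ C - ψ₁ D) / (4r)²`, and the shift `s ↦ s + 2r` sends `(A, B, C, D)` to
`(C + 1, D + 1, A, B)`, so the functional equation is `ψ₁ x - ψ₁ (x + 1) = 1 / x²` at `C` and `D`.
As `ψ₁ x = ∑ 1 / (x + n)²` is decreasing and `C ≤ A`, `D ≤ B`, the second log-derivative is
`≤ 0`; with the functional equation this squeezes it between the right-hand side and `0`.
Two solutions tending to `0` differ by a `4r`-periodic function tending to `0`, hence agree.

The series for `ψ₁` comes from differentiating `ψ x = lim (log N - ∑_{n<N} 1 / (x + n))` termwise;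
this limit follows from `ψ (x + 1) = ψ x + 1 / x` and `log (y - 1) ≤ ψ y ≤ log y`, the slope
bounds of the convex function `log ∘ Γ`.
-/

open Filter Real

/-- Numerators of the convergents of a generalized continued fraction with
integer part `b₀`, partial numerators `a n` and partial denominators `b n` (for `n ≥ 1`). -/
noncomputable def cfNum (b₀ : ℝ) (a b : ℕ → ℝ) : ℕ → ℝ
  | 0 => b₀
  | 1 => b 1 * b₀ + a 1
  | n + 2 => b (n + 2) * cfNum b₀ a b (n + 1) + a (n + 2) * cfNum b₀ a b n

/-- Denominators of the convergents of a generalized continued fraction. -/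
noncomputable def cfDen (a b : ℕ → ℝ) : ℕ → ℝ
  | 0 => 1
  | 1 => b 1
  | n + 2 => b (n + 2) * cfDen a b (n + 1) + a (n + 2) * cfDen a b n

/-- `IsCFLimit b₀ a b L` means: the convergents of the generalized continued fraction
`b₀ + a 1 / (b 1 + a 2 / (b 2 + ⋯))` tend to `L`. -/
def IsCFLimit (b₀ : ℝ) (a b : ℕ → ℝ) (L : ℝ) : Prop :=
  Filter.Tendsto (fun n => cfNum b₀ a b n / cfDen a b n) Filter.atTop (nhds L)

/-- The generalized Brouncker function `y(s, r)` expressed through the Gamma function. -/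
noncomputable def yGen (r s : ℝ) : ℝ :=
  4 * r * (Real.Gamma ((s + 2*r + 1) / (4*r)) * Real.Gamma ((s + 4*r - 1) / (4*r))) /
    (Real.Gamma ((s + 1) / (4*r)) * Real.Gamma ((s + 2*r - 1) / (4*r)))

open Set Topology

lemma tendsto_log_nat_add_sub_log (c : ℝ) :
    Tendsto (fun N : ℕ => log (N + c) - log N) atTop (𝓝 0) := by
  have h : Tendsto (fun N : ℕ => log (1 + c / N)) atTop (𝓝 (log (1 + 0))) :=
    ((continuousAt_log (by norm_num)).tendsto).comp
      ((tendsto_const_div_atTop_nhds_zero_nat c).const_add 1)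
  rw [add_zero, log_one] at h
  refine h.congr' ?_
  filter_upwards [eventually_gt_atTop ⌈|c|⌉₊] with N hN
  have hN' : |c| < N := Nat.lt_of_ceil_lt hN
  have hN0 : (0 : ℝ) < N := (abs_nonneg c).trans_lt hN'
  rw [← log_div (by linarith [neg_abs_le c]) hN0.ne', add_div, div_self hN0.ne']

lemma tendsto_one_div_add_sq_atTop (a : ℝ) :
    Tendsto (fun s : ℝ => 1 / (s + a) ^ 2) atTop (𝓝 0) := by
  simpa only [one_div, Pi.inv_def, Function.comp_def, id] using
    ((tendsto_pow_atTop two_ne_zero).comp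
      (tendsto_atTop_add_const_right _ a tendsto_id)).inv_tendsto_atTop

lemma eq_of_add_shift_eq_of_tendsto {f g h : ℝ → ℝ} {p : ℝ} {l : ℝ} (hp : 0 < p)
    (hf : ∀ s, 0 < s → f s + f (s + p) = h s) (hg : ∀ s, 0 < s → g s + g (s + p) = h s)
    (hfl : Tendsto f atTop (𝓝 l)) (hgl : Tendsto g atTop (𝓝 l)) {s : ℝ} (hs : 0 < s) :
    f s = g s := by
  set d := fun t => f t - g t
  have hperiod : ∀ t, 0 < t → d (t + 2 * p) = d t := fun t ht => by
    have h₁ := hf t ht; have h₂ := hg t ht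
    have h₃ := hf (t + p) (by linarith); have h₄ := hg (t + p) (by linarith)
    simp only [d, show t + 2 * p = t + p + p by ring]
    linarith
  have hconst : ∀ n : ℕ, d (s + n * (2 * p)) = d s := fun n => by
    induction n with
    | zero => simp
    | succ n ih => rw [Nat.cast_succ, add_one_mul, ← add_assoc, hperiod _ (by positivity), ih]
  have hlim : Tendsto (fun n : ℕ => d (s + n * (2 * p))) atTop (𝓝 0) := by
    rw [← sub_self l]
    exact (hfl.sub hgl).comp (tendsto_atTop_add_const_left _ s
      (tendsto_natCast_atTop_atTop.atTop_mul_const (by positivity)))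
  simp only [hconst] at hlim
  exact sub_eq_zero.mp (tendsto_nhds_unique tendsto_const_nhds hlim)

noncomputable def trigamma (x : ℝ) : ℝ := ∑' n : ℕ, 1 / (x + n) ^ 2

lemma summable_one_div_add_nat_sq {x : ℝ} (hx : 0 < x) :
    Summable fun n : ℕ => 1 / (x + n) ^ 2 := by
  have := (Real.summable_one_div_nat_add_rpow x 2).mpr one_lt_two
  refine this.congr fun n => ?_
  rw [abs_of_pos (by positivity), rpow_two, add_comm]

lemma one_div_add_nat_sq_le_of_le {x y : ℝ} (hx : 0 < x) (hxy : x ≤ y) (n : ℕ) :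
    1 / (y + n) ^ 2 ≤ 1 / (x + n) ^ 2 :=
  one_div_le_one_div_of_le (by positivity) (by gcongr)

lemma trigamma_antitoneOn : AntitoneOn trigamma (Ioi 0) := fun _ hx _ _ hxy =>
  (summable_one_div_add_nat_sq (lt_of_lt_of_le hx hxy)).tsum_le_tsum
    (one_div_add_nat_sq_le_of_le hx hxy) (summable_one_div_add_nat_sq hx)

lemma trigamma_eq_add_trigamma_add_one {x : ℝ} (hx : 0 < x) :
    trigamma x = 1 / x ^ 2 + trigamma (x + 1) := by
  rw [trigamma, (summable_one_div_add_nat_sq hx).tsum_eq_zero_add, trigamma]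
  simp only [Nat.cast_zero, add_zero, Nat.cast_succ, add_assoc, add_comm (1 : ℝ)]

lemma tendstoUniformlyOn_sum_one_div_add_nat_sq {a : ℝ} (ha : 0 < a) :
    TendstoUniformlyOn (fun (N : ℕ) (x : ℝ) => ∑ n ∈ Finset.range N, 1 / (x + n) ^ 2) trigamma
      atTop (Ioi a) :=
  tendstoUniformlyOn_tsum_nat (summable_one_div_add_nat_sq ha) fun n x hx => by
    rw [norm_of_nonneg (by positivity)]
    exact one_div_add_nat_sq_le_of_le ha (le_of_lt hx) n

noncomputable def digamma : ℝ → ℝ := deriv fun t => log (Gamma t)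

lemma differentiableAt_log_Gamma {x : ℝ} (hx : 0 < x) :
    DifferentiableAt ℝ (fun t => log (Gamma t)) x :=
  ((differentiableOn_Gamma_Ioi x hx).differentiableAt (Ioi_mem_nhds hx)).log
    (Gamma_pos_of_pos hx).ne'

lemma log_Gamma_add_one {x : ℝ} (hx : 0 < x) : log (Gamma (x + 1)) = log (Gamma x) + log x := by
  rw [Gamma_add_one hx.ne', log_mul hx.ne' (Gamma_pos_of_pos hx).ne', add_comm]

lemma digamma_add_one {x : ℝ} (hx : 0 < x) : digamma (x + 1) = digamma x + 1 / x := by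
  have hfe : (fun t => log (Gamma (t + 1))) =ᶠ[𝓝 x] fun t => log (Gamma t) + log t :=
    eventually_of_mem (Ioi_mem_nhds hx) fun t ht => log_Gamma_add_one ht
  have h := (differentiableAt_log_Gamma hx).hasDerivAt.add (hasDerivAt_log hx.ne')
  rw [digamma, ← deriv_comp_add_const, (h.congr_of_eventuallyEq hfe).deriv, one_div]

lemma digamma_add_nat {x : ℝ} (hx : 0 < x) (N : ℕ) :
    digamma (x + N) = digamma x + ∑ n ∈ Finset.range N, 1 / (x + n) := by
  induction N with
  | zero => simp
  | succ N ih =>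
    rw [Nat.cast_succ, ← add_assoc, digamma_add_one (by positivity), ih, Finset.sum_range_succ,
      add_assoc]

lemma log_sub_one_le_digamma {y : ℝ} (hy : 1 < y) : log (y - 1) ≤ digamma y := by
  have h := convexOn_log_Gamma.slope_le_deriv (x := y - 1) (y := y) (by simp; linarith)
    (by simp; linarith) (by linarith) (differentiableAt_log_Gamma (by linarith))
  have hfe := log_Gamma_add_one (x := y - 1) (by linarith)
  rw [sub_add_cancel] at hfe
  simp only [slope_def_field, Function.comp_apply] at h
  rwa [hfe, show y - (y - 1) = 1 by ring, div_one, add_sub_cancel_left] at h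

lemma digamma_le_log {y : ℝ} (hy : 0 < y) : digamma y ≤ log y := by
  have h := convexOn_log_Gamma.deriv_le_slope (x := y) (y := y + 1) hy
    (by simp; linarith) (by linarith) (differentiableAt_log_Gamma hy)
  simp only [slope_def_field, Function.comp_apply] at h
  rwa [log_Gamma_add_one hy, add_sub_cancel_left, add_sub_cancel_left, div_one] at h

lemma tendsto_log_sub_sum_inv {x : ℝ} (hx : 0 < x) :
    Tendsto (fun N : ℕ => log N - ∑ n ∈ Finset.range N, 1 / (x + n)) atTop (𝓝 (digamma x)) := by
  have hsq : Tendsto (fun N : ℕ => digamma (x + N) - log N) atTop (𝓝 0) := by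
    refine tendsto_of_tendsto_of_tendsto_of_le_of_le' (tendsto_log_nat_add_sub_log (x - 1))
      (tendsto_log_nat_add_sub_log x) ?_ ?_
    · filter_upwards [eventually_ge_atTop 1] with N hN
      have hN' : (1 : ℝ) ≤ N := by exact_mod_cast hN
      have hlow := log_sub_one_le_digamma (y := x + N) (by linarith)
      rw [show (N : ℝ) + (x - 1) = x + N - 1 by ring]
      linarith
    · filter_upwards with N
      have hup := digamma_le_log (y := x + N) (by positivity)
      rw [add_comm (N : ℝ)]
      linarith
  have h := hsq.neg.add_const (digamma x)
  rw [neg_zero, zero_add] at h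
  refine h.congr fun N => ?_
  rw [digamma_add_nat hx]
  ring

lemma hasDerivAt_log_sub_sum_inv (N : ℕ) {x : ℝ} (hx : 0 < x) :
    HasDerivAt (fun t : ℝ => log N - ∑ n ∈ Finset.range N, 1 / (t + n))
      (∑ n ∈ Finset.range N, 1 / (x + n) ^ 2) x := by
  have h := (HasDerivAt.fun_sum fun n (_ : n ∈ Finset.range N) =>
    ((hasDerivAt_id x).add_const (n : ℝ)).inv (by positivity)).const_sub (log N)
  simpa only [id, Pi.inv_apply, one_div, neg_div, Finset.sum_neg_distrib, neg_neg] using h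

lemma hasDerivAt_digamma {x : ℝ} (hx : 0 < x) : HasDerivAt digamma (trigamma x) x :=
  hasDerivAt_of_tendstoUniformlyOn isOpen_Ioi
    (tendstoUniformlyOn_sum_one_div_add_nat_sq (half_pos hx))
    (Eventually.of_forall fun N _ ht => hasDerivAt_log_sub_sum_inv N ((half_pos hx).trans ht))
    (fun _ ht => tendsto_log_sub_sum_inv ((half_pos hx).trans ht)) (half_lt_self hx)

noncomputable def yGenComb (g : ℝ → ℝ) (r t : ℝ) : ℝ :=
  g ((t + 2*r + 1) / (4*r)) + g ((t + 4*r - 1) / (4*r)) - g ((t + 1) / (4*r))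
    - g ((t + 2*r - 1) / (4*r))

section
variable {r : ℝ} (hr : 1 / 2 < r)
include hr

lemma yGen_args_pos {t : ℝ} (ht : 0 < t) :
    0 < (t + 2*r + 1) / (4*r) ∧ 0 < (t + 4*r - 1) / (4*r) ∧ 0 < (t + 1) / (4*r) ∧
      0 < (t + 2*r - 1) / (4*r) :=
  ⟨div_pos (by linarith) (by linarith), div_pos (by linarith) (by linarith),
    div_pos (by linarith) (by linarith), div_pos (by linarith) (by linarith)⟩

lemma log_yGen {t : ℝ} (ht : 0 < t) :
    log (yGen r t) = log (4*r) + yGenComb (fun x => log (Gamma x)) r t := by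
  obtain ⟨hA, hB, hC, hD⟩ := yGen_args_pos hr ht
  have gA := (Gamma_pos_of_pos hA).ne'
  have gB := (Gamma_pos_of_pos hB).ne'
  have gC := (Gamma_pos_of_pos hC).ne'
  have gD := (Gamma_pos_of_pos hD).ne'
  rw [yGen, log_div (by positivity) (mul_ne_zero gC gD), log_mul (by linarith) (mul_ne_zero gA gB),
    log_mul gA gB, log_mul gC gD, yGenComb]
  ring

lemma hasDerivAt_yGenComb {g g' : ℝ → ℝ} (hg : ∀ x, 0 < x → HasDerivAt g (g' x) x) {t : ℝ}
    (ht : 0 < t) : HasDerivAt (yGenComb g r) (yGenComb g' r t / (4*r)) t := by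
  obtain ⟨hA, hB, hC, hD⟩ := yGen_args_pos hr ht
  have dA := (hg _ hA).comp t
    ((((hasDerivAt_id' t).add_const (2*r)).add_const 1).div_const (4*r))
  have dB := (hg _ hB).comp t
    ((((hasDerivAt_id' t).add_const (4*r)).sub_const 1).div_const (4*r))
  have dC := (hg _ hC).comp t (((hasDerivAt_id' t).add_const 1).div_const (4*r))
  have dD := (hg _ hD).comp t
    ((((hasDerivAt_id' t).add_const (2*r)).sub_const 1).div_const (4*r))
  refine (((dA.add dB).sub dC).sub dD).congr_deriv ?_
  rw [yGenComb]
  ring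

lemma deriv_log_yGen {t : ℝ} (ht : 0 < t) :
    deriv (fun t => log (yGen r t)) t = yGenComb digamma r t / (4*r) := by
  have heq : (fun t => log (yGen r t)) =ᶠ[𝓝 t]
      fun t => log (4*r) + yGenComb (fun x => log (Gamma x)) r t :=
    eventually_of_mem (Ioi_mem_nhds ht) fun u hu => log_yGen hr hu
  rw [heq.deriv_eq]
  exact ((hasDerivAt_yGenComb hr
    (fun x hx => (differentiableAt_log_Gamma hx).hasDerivAt) ht).const_add _).deriv

lemma deriv_deriv_log_yGen {s : ℝ} (hs : 0 < s) :
    deriv (deriv fun t => log (yGen r t)) s = yGenComb trigamma r s / (4*r) ^ 2 := by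
  have heq : (deriv fun t => log (yGen r t)) =ᶠ[𝓝 s] fun t => yGenComb digamma r t / (4*r) :=
    eventually_of_mem (Ioi_mem_nhds hs) fun u hu => deriv_log_yGen hr hu
  rw [heq.deriv_eq, ((hasDerivAt_yGenComb hr (fun x hx => hasDerivAt_digamma hx) hs).div_const
    (4*r)).deriv, div_div, sq]

lemma yGenComb_trigamma_nonpos {s : ℝ} (hs : 0 < s) : yGenComb trigamma r s ≤ 0 := by
  obtain ⟨hA, hB, hC, hD⟩ := yGen_args_pos hr hs
  have hCA := trigamma_antitoneOn hC hA (by gcongr; linarith)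
  have hDB := trigamma_antitoneOn hD hB (by gcongr; linarith)
  rw [yGenComb]
  linarith

lemma yGenComb_trigamma_add_shift {s : ℝ} (hs : 0 < s) :
    yGenComb trigamma r s / (4*r) ^ 2 + yGenComb trigamma r (s + 2*r) / (4*r) ^ 2 =
      -(1 / (s + 1) ^ 2) - 1 / (s + 2*r - 1) ^ 2 := by
  obtain ⟨-, -, hC, hD⟩ := yGen_args_pos hr hs
  have e1 : (s + 2*r + 2*r + 1) / (4*r) = (s + 1) / (4*r) + 1 := by field_simp; ring
  have e2 : (s + 2*r + 4*r - 1) / (4*r) = (s + 2*r - 1) / (4*r) + 1 := by field_simp; ring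
  have e4 : (s + 2*r + 2*r - 1) / (4*r) = (s + 4*r - 1) / (4*r) := by ring
  rw [yGenComb, yGenComb, e1, e2, e4, trigamma_eq_add_trigamma_add_one hC,
    trigamma_eq_add_trigamma_add_one hD]
  have : s + 1 ≠ 0 := by linarith
  have : s + 2*r - 1 ≠ 0 := by linarith
  field_simp
  ring

end

theorem second_log_deriv_functional_equation (r : ℝ) (hr : 1 / 2 < r) :
    (∀ s : ℝ, 0 < s →
        deriv (deriv (fun t : ℝ => Real.log (yGen r t))) s +
          deriv (deriv (fun t : ℝ => Real.log (yGen r t))) (s + 2 * r) =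
        -(1 / (s + 1) ^ 2) - 1 / (s + 2 * r - 1) ^ 2) ∧
    Tendsto (fun s : ℝ => deriv (deriv (fun t : ℝ => Real.log (yGen r t))) s)
      atTop (nhds 0) ∧
    ∀ f : ℝ → ℝ,
      (∀ s : ℝ, 0 < s → f s + f (s + 2 * r) = -(1 / (s + 1) ^ 2) - 1 / (s + 2 * r - 1) ^ 2) →
      Tendsto f atTop (nhds 0) →
      ∀ s : ℝ, 0 < s → f s = deriv (deriv (fun t : ℝ => Real.log (yGen r t))) s := by
  set F := deriv (deriv fun t : ℝ => log (yGen r t))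
  have hF : ∀ s : ℝ, 0 < s → F s = yGenComb trigamma r s / (4 * r) ^ 2 :=
    fun _ hs => deriv_deriv_log_yGen hr hs
  have hFE : ∀ s : ℝ, 0 < s →
      F s + F (s + 2 * r) = -(1 / (s + 1) ^ 2) - 1 / (s + 2 * r - 1) ^ 2 := fun s hs => by
    rw [hF s hs, hF (s + 2 * r) (by linarith)]
    exact yGenComb_trigamma_add_shift hr hs
  have hnonpos : ∀ s : ℝ, 0 < s → F s ≤ 0 := fun s hs => by
    rw [hF s hs]
    exact div_nonpos_of_nonpos_of_nonneg (yGenComb_trigamma_nonpos hr hs) (sq_nonneg _)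
  have hrhs : Tendsto (fun s : ℝ => -(1 / (s + 1) ^ 2) - 1 / (s + 2 * r - 1) ^ 2) atTop (𝓝 0) := by
    simpa using (tendsto_one_div_add_sq_atTop 1).neg.sub
      ((tendsto_one_div_add_sq_atTop (2 * r - 1)).congr fun s => by ring_nf)
  have hlim : Tendsto F atTop (𝓝 0) := by
    refine tendsto_of_tendsto_of_tendsto_of_le_of_le' hrhs tendsto_const_nhds ?_ ?_
    · filter_upwards [eventually_gt_atTop 0] with s hs
      linarith [hFE s hs, hnonpos (s + 2 * r) (by linarith)]
    · filter_upwards [eventually_gt_atTop 0] with s hs using hnonpos s hs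
  exact ⟨hFE, hlim, fun f hf hf0 s hs =>
    eq_of_add_shift_eq_of_tendsto (by linarith) hf hFE hf0 hlim hs⟩
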